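/- Let T be the 2-homogeneous rooted tree (q = 1), write D_n = {a_n, b_n} for n ≥ 1, let φ be a self-map of T and let 1 ≤ p < ∞. Then C_φ is a bounded operator on T_p, and its operator norm satisfies: (1) if φ(o) ≠ o then ‖C_φ‖^p = 2; (2) if φ(o) = o then: (a) if φ ≡ o, or if for every n ≥ 1 the map φ sends D_n bijectively onto D_m for some m ≥ 1, then ‖C_φ‖^p = 1; (b) if for each n ≥ 1 exactly one element of D_n is mapped by φ to o, then ‖C_φ‖^p = 3/2; (c) if there exists n ≥ 1 with φ(a_n) = φ(b_n) ≠ o, or there exists n ≥ 1 with |φ(a_n)| ≠ |φ(b_n)| and both |φ(a_n)|, |φ(b_n)| nonzero, then ‖C_φ‖^p = 2. -/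

import Mathlib

open scoped BigOperators Classical

noncomputable section

/-- `treeC q n` is the number `c_n` of vertices at level `n` of the
`(q+1)`-homogeneous rooted tree: `c_0 = 1` and `c_n = (q+1) q^(n-1)` for `n ≥ 1`. -/
def treeC (q n : ℕ) : ℕ := if n = 0 then 1 else (q + 1) * q ^ (n - 1)

/-- An abstract `(q+1)`-homogeneous rooted tree, described by its vertex set, root,
level function `|·|` (graph distance to the root), and the level counts:
level `n` contains exactly `c_n = treeC q n` vertices. -/
structure HomTree (q : ℕ) where
  V : Type
  root : V
  level : V → ℕ
  level_eq_zero_iff : ∀ v : V, level v = 0 ↔ v = root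
  finiteLevel : ∀ n : ℕ, {v : V | level v = n}.Finite
  card_level : ∀ n : ℕ, (finiteLevel n).toFinset.card = treeC q n

namespace HomTree

variable {q : ℕ} (T : HomTree q)

/-- The set `D_n` of vertices of level `n`, as a finset. -/
def levelFinset (n : ℕ) : Finset T.V := (T.finiteLevel n).toFinset

/-- `M_p(n, f)` for `0 < p < ∞`:
`M_p(n,f) = ((1/c_n) ∑_{|v|=n} |f v|^p)^(1/p)` (which equals `|f o|` for `n = 0`). -/
def Mp (p : ℝ) (n : ℕ) (f : T.V → ℂ) : ℝ :=
  ((1 / (treeC q n : ℝ)) * ∑ v ∈ T.levelFinset n, ‖f v‖ ^ p) ^ (1 / p)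

/-- `M_∞(n, f) = max_{|v| = n} |f v|`. -/
def Minf (n : ℕ) (f : T.V → ℂ) : ℝ :=
  sSup ((fun v => ‖f v‖) '' {v : T.V | T.level v = n})

/-- `f ∈ T_p`, i.e. `‖f‖_p = sup_n M_p(n,f) < ∞`. -/
def memTp (p : ℝ) (f : T.V → ℂ) : Prop := BddAbove (Set.range fun n => T.Mp p n f)

/-- `‖f‖_p = sup_n M_p(n, f)`. -/
def normTp (p : ℝ) (f : T.V → ℂ) : ℝ := ⨆ n, T.Mp p n f

/-- `f ∈ T_∞`. -/
def memTinf (f : T.V → ℂ) : Prop := BddAbove (Set.range fun n => T.Minf n f)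

/-- `‖f‖_∞ = sup_n M_∞(n, f)`. -/
def normTinf (f : T.V → ℂ) : ℝ := ⨆ n, T.Minf n f

/-- `f ∈ T_{p,0}`: `f ∈ T_p` and `M_p(n,f) → 0` as `n → ∞`. -/
def memTp0 (p : ℝ) (f : T.V → ℂ) : Prop :=
  T.memTp p f ∧ Filter.Tendsto (fun n => T.Mp p n f) Filter.atTop (nhds 0)

/-- `f ∈ T_{∞,0}`. -/
def memTinf0 (f : T.V → ℂ) : Prop :=
  T.memTinf f ∧ Filter.Tendsto (fun n => T.Minf n f) Filter.atTop (nhds 0)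

/-- `N_φ(n, w)`: the number of preimages of `w` under `φ` at level `n`. -/
def Nphi (phi : T.V → T.V) (n : ℕ) (w : T.V) : ℕ :=
  ((T.levelFinset n).filter fun v => phi v = w).card

/-- `N_{m,n} = max_{|w| = m} N_φ(n, w)`. -/
def Nmax (phi : T.V → T.V) (m n : ℕ) : ℕ :=
  (T.levelFinset m).sup fun w => T.Nphi phi n w

/-- `C_φ` is a bounded operator on `T_p`: it maps `T_p` into `T_p` and
`‖f ∘ φ‖_p ≤ C ‖f‖_p` for some constant `C`. -/
def BoundedCompTp (p : ℝ) (phi : T.V → T.V) : Prop :=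
  (∀ f : T.V → ℂ, T.memTp p f → T.memTp p (f ∘ phi)) ∧
  ∃ C : ℝ, ∀ f : T.V → ℂ, T.memTp p f → T.normTp p (f ∘ phi) ≤ C * T.normTp p f

/-- The operator norm of `C_φ` on `T_p`: `sup {‖f ∘ φ‖_p : f ∈ T_p, ‖f‖_p = 1}`. -/
def opNormTp (p : ℝ) (phi : T.V → T.V) : ℝ :=
  sSup {x : ℝ | ∃ f : T.V → ℂ, T.memTp p f ∧ T.normTp p f = 1 ∧ x = T.normTp p (f ∘ phi)}

/-- `C_φ` is a bounded operator on `T_{p,0}`. -/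
def BoundedCompTp0 (p : ℝ) (phi : T.V → T.V) : Prop :=
  (∀ f : T.V → ℂ, T.memTp0 p f → T.memTp0 p (f ∘ phi)) ∧
  ∃ C : ℝ, ∀ f : T.V → ℂ, T.memTp0 p f → T.normTp p (f ∘ phi) ≤ C * T.normTp p f

/-- The operator norm of `C_φ` on `T_{p,0}`. -/
def opNormTp0 (p : ℝ) (phi : T.V → T.V) : ℝ :=
  sSup {x : ℝ | ∃ f : T.V → ℂ, T.memTp0 p f ∧ T.normTp p f = 1 ∧ x = T.normTp p (f ∘ phi)}

/-- `C_φ` is a bounded operator on `T_{∞,0}`. -/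
def BoundedCompTinf0 (phi : T.V → T.V) : Prop :=
  (∀ f : T.V → ℂ, T.memTinf0 f → T.memTinf0 (f ∘ phi)) ∧
  ∃ C : ℝ, ∀ f : T.V → ℂ, T.memTinf0 f → T.normTinf (f ∘ phi) ≤ C * T.normTinf f

end HomTree

/-!
On the 2-homogeneous tree a level has at most two vertices, so one value of `f` is
controlled by its norm: `|f v|^p ≤ 2 ‖f‖_p^p`. Hence every level mean of `|f ∘ φ|^p` is at
most `2 ‖f‖_p^p`, which gives boundedness and `‖C_φ‖^p ≤ 2`. If `φ` fixes the root and maps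
levels bijectively onto levels (or everything to the root), each level mean of `|f ∘ φ|^p` is
one of `|f|^p`, so `‖C_φ‖ ≤ 1`; if on every level one of the two vertices goes to the root,
the level means are at most `(1 + 2) / 2`. The matching lower bounds come from test functions
of norm one with `|f o|^p ∈ {0, 1}` and `|f|^p = 2` on a set meeting each level at most once.
-/

namespace HomTree

section General

variable {q : ℕ} {T : HomTree q} {p : ℝ} {f g : T.V → ℂ} {φ : T.V → T.V}

lemma mem_levelFinset {n : ℕ} {v : T.V} : v ∈ T.levelFinset n ↔ T.level v = n :=
  Set.Finite.mem_toFinset _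

lemma coe_levelFinset (n : ℕ) : (T.levelFinset n : Set T.V) = {v | T.level v = n} :=
  Set.Finite.coe_toFinset _

lemma card_levelFinset (n : ℕ) : (T.levelFinset n).card = treeC q n :=
  T.card_level n

lemma setOf_level_eq_zero : {v | T.level v = 0} = {T.root} := by
  ext v
  exact T.level_eq_zero_iff v

lemma levelFinset_zero : T.levelFinset 0 = {T.root} := by
  rw [← Finset.coe_inj, coe_levelFinset, setOf_level_eq_zero, Finset.coe_singleton]

lemma Mp_nonneg (f : T.V → ℂ) (n : ℕ) : 0 ≤ T.Mp p n f := by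
  unfold Mp
  positivity

lemma normTp_nonneg (f : T.V → ℂ) : 0 ≤ T.normTp p f :=
  Real.iSup_nonneg fun n => Mp_nonneg f n

lemma Mp_rpow (hp : p ≠ 0) (f : T.V → ℂ) (n : ℕ) :
    T.Mp p n f ^ p = (treeC q n : ℝ)⁻¹ * ∑ v ∈ T.levelFinset n, ‖f v‖ ^ p := by
  rw [Mp, one_div, one_div, Real.rpow_inv_rpow (by positivity) hp]

lemma Mp_zero_rpow (hp : p ≠ 0) (f : T.V → ℂ) : T.Mp p 0 f ^ p = ‖f T.root‖ ^ p := by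
  simp [Mp_rpow hp, levelFinset_zero, treeC]

lemma Mp_rpow_le_normTp_rpow (hp : 0 < p) (hf : T.memTp p f) (n : ℕ) :
    T.Mp p n f ^ p ≤ T.normTp p f ^ p :=
  Real.rpow_le_rpow (Mp_nonneg f n) (le_ciSup hf n) hp.le

lemma norm_rpow_le_treeC_mul (hp : 0 < p) (f : T.V → ℂ) (w : T.V) :
    ‖f w‖ ^ p ≤ treeC q (T.level w) * T.Mp p (T.level w) f ^ p := by
  have hw : w ∈ T.levelFinset (T.level w) := mem_levelFinset.2 rfl
  have hc : (0 : ℝ) < treeC q (T.level w) := by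
    rw [← card_levelFinset]
    exact_mod_cast Finset.card_pos.2 ⟨w, hw⟩
  rw [Mp_rpow hp.ne', mul_inv_cancel_left₀ hc.ne']
  exact Finset.single_le_sum (f := fun v => ‖f v‖ ^ p) (fun v _ => by positivity) hw

lemma Mp_rpow_le_of_forall (hp : p ≠ 0) {n : ℕ} {B : ℝ} (hB : 0 ≤ B)
    (h : ∀ v, T.level v = n → ‖g v‖ ^ p ≤ B) : T.Mp p n g ^ p ≤ B := by
  have hsum : ∑ v ∈ T.levelFinset n, ‖g v‖ ^ p ≤ treeC q n * B := by
    rw [← card_levelFinset, ← nsmul_eq_mul]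
    exact Finset.sum_le_card_nsmul _ _ B fun v hv => h v (mem_levelFinset.1 hv)
  rw [Mp_rpow hp]
  rcases (Nat.cast_nonneg (α := ℝ) (treeC q n)).eq_or_lt with hc | hc
  · simp [← hc, hB]
  · exact inv_mul_le_of_le_mul₀ hc.le hB (by linarith)

lemma Mp_rpow_eq_of_forall (hp : p ≠ 0) {n : ℕ} (hc : treeC q n ≠ 0) {B : ℝ}
    (h : ∀ v, T.level v = n → ‖g v‖ ^ p = B) : T.Mp p n g ^ p = B := by
  rw [Mp_rpow hp, Finset.sum_congr rfl fun v hv => h v (mem_levelFinset.1 hv),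
    Finset.sum_const, card_levelFinset, nsmul_eq_mul, inv_mul_cancel_left₀ (by exact_mod_cast hc)]

lemma Mp_comp_of_bijOn {n m : ℕ}
    (h : Set.BijOn φ {v | T.level v = n} {v | T.level v = m}) (f : T.V → ℂ) :
    T.Mp p n (f ∘ φ) = T.Mp p m f := by
  rw [← coe_levelFinset, ← coe_levelFinset] at h
  have hc : treeC q n = treeC q m := by
    rw [← card_levelFinset, ← card_levelFinset]
    exact Finset.card_nbij φ h.mapsTo h.injOn h.surjOn
  have hsum : ∑ v ∈ T.levelFinset n, ‖(f ∘ φ) v‖ ^ p = ∑ v ∈ T.levelFinset m, ‖f v‖ ^ p :=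
    Finset.sum_nbij φ (fun _ hv => h.mapsTo hv) h.injOn h.surjOn fun _ _ => rfl
  rw [Mp, Mp, hc, hsum]

lemma memTp_of_Mp_le {t : ℝ} (h : ∀ n, T.Mp p n g ≤ t) : T.memTp p g :=
  ⟨t, Set.forall_mem_range.2 h⟩

lemma normTp_eq_rpow_inv (hp : 0 < p) {C : ℝ} (hle : ∀ n, T.Mp p n g ^ p ≤ C)
    (hattain : ∃ n, T.Mp p n g ^ p = C) : T.memTp p g ∧ T.normTp p g = C ^ p⁻¹ := by
  obtain ⟨n₀, hn₀⟩ := hattain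
  have hC : 0 ≤ C := hn₀ ▸ Real.rpow_nonneg (Mp_nonneg g n₀) p
  have hle' : ∀ n, T.Mp p n g ≤ C ^ p⁻¹ :=
    fun n => (Real.le_rpow_inv_iff_of_pos (Mp_nonneg g n) hC hp).2 (hle n)
  refine ⟨memTp_of_Mp_le hle', le_antisymm (ciSup_le hle') ?_⟩
  calc C ^ p⁻¹ = T.Mp p n₀ g := by
        rw [← hn₀, Real.rpow_rpow_inv (Mp_nonneg g n₀) hp.ne']
    _ ≤ T.normTp p g := le_ciSup (memTp_of_Mp_le hle') n₀

lemma Mp_comp_le_of_Mp_rpow_le (hp : 0 < p) {C : ℝ} (hC : 0 ≤ C)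
    (hle : ∀ f, T.memTp p f → ∀ n, T.Mp p n (f ∘ φ) ^ p ≤ C * T.normTp p f ^ p)
    (hf : T.memTp p f) (n : ℕ) : T.Mp p n (f ∘ φ) ≤ C ^ p⁻¹ * T.normTp p f := by
  have hN := normTp_nonneg (p := p) f
  rw [← Real.rpow_le_rpow_iff (Mp_nonneg _ n) (by positivity) hp,
    Real.mul_rpow (by positivity) hN, Real.rpow_inv_rpow hC hp.ne']
  exact hle f hf n

lemma normTp_comp_le_of_Mp_rpow_le (hp : 0 < p) {C : ℝ} (hC : 0 ≤ C)
    (hle : ∀ f, T.memTp p f → ∀ n, T.Mp p n (f ∘ φ) ^ p ≤ C * T.normTp p f ^ p)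
    (hf : T.memTp p f) : T.normTp p (f ∘ φ) ≤ C ^ p⁻¹ * T.normTp p f :=
  ciSup_le (Mp_comp_le_of_Mp_rpow_le hp hC hle hf)

lemma Mp_comp_rpow_le_of_forall_eq_root (hp : 0 < p) (h : ∀ v, φ v = T.root)
    (hf : T.memTp p f) (n : ℕ) : T.Mp p n (f ∘ φ) ^ p ≤ T.normTp p f ^ p := by
  refine Mp_rpow_le_of_forall hp.ne' (Real.rpow_nonneg (normTp_nonneg f) p) fun v _ => ?_
  simpa [h v, Mp_zero_rpow hp.ne'] using Mp_rpow_le_normTp_rpow hp hf 0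

lemma Mp_comp_rpow_le_of_bijOn (hp : 0 < p) (hroot : φ T.root = T.root)
    (h : ∀ n, 1 ≤ n → ∃ m, Set.BijOn φ {v | T.level v = n} {v | T.level v = m})
    (hf : T.memTp p f) (n : ℕ) : T.Mp p n (f ∘ φ) ^ p ≤ T.normTp p f ^ p := by
  rcases Nat.eq_zero_or_pos n with rfl | hn
  · rw [Mp_zero_rpow hp.ne', Function.comp_apply, hroot, ← Mp_zero_rpow hp.ne']
    exact Mp_rpow_le_normTp_rpow hp hf 0
  · obtain ⟨m, hm⟩ := h n hn
    rw [Mp_comp_of_bijOn hm]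
    exact Mp_rpow_le_normTp_rpow hp hf m

theorem boundedCompTp_of_Mp_rpow_le (hp : 0 < p) {C : ℝ} (hC : 0 ≤ C)
    (hle : ∀ f, T.memTp p f → ∀ n, T.Mp p n (f ∘ φ) ^ p ≤ C * T.normTp p f ^ p) :
    T.BoundedCompTp p φ :=
  ⟨fun _ hf => memTp_of_Mp_le (Mp_comp_le_of_Mp_rpow_le hp hC hle hf),
    C ^ p⁻¹, fun _ hf => normTp_comp_le_of_Mp_rpow_le hp hC hle hf⟩

theorem opNormTp_rpow_eq (hp : 0 < p) {C : ℝ}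
    (hle : ∀ f, T.memTp p f → ∀ n, T.Mp p n (f ∘ φ) ^ p ≤ C * T.normTp p f ^ p)
    (hattain : ∃ f, T.memTp p f ∧ T.normTp p f = 1 ∧ ∃ n, T.Mp p n (f ∘ φ) ^ p = C) :
    T.opNormTp p φ ^ p = C := by
  obtain ⟨f₀, hf₀, hf₀1, hattain₀⟩ := hattain
  have hle₁ : ∀ f, T.memTp p f → T.normTp p f = 1 → ∀ n, T.Mp p n (f ∘ φ) ^ p ≤ C :=
    fun f hf h1 n => by simpa [h1] using hle f hf n
  have hC : 0 ≤ C := by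
    obtain ⟨n, hn⟩ := hattain₀
    exact hn ▸ Real.rpow_nonneg (Mp_nonneg _ n) p
  suffices T.opNormTp p φ = C ^ p⁻¹ by rw [this, Real.rpow_inv_rpow hC hp.ne']
  refine IsGreatest.csSup_eq ⟨⟨f₀, hf₀, hf₀1,
    ((normTp_eq_rpow_inv hp (hle₁ f₀ hf₀ hf₀1) hattain₀).2).symm⟩, ?_⟩
  rintro _ ⟨f, hf, h1, rfl⟩
  simpa [h1] using normTp_comp_le_of_Mp_rpow_le hp hC hle hf

end General

section TwoHomogeneous

variable {T : HomTree 1} {p : ℝ} {f : T.V → ℂ} {φ : T.V → T.V}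

lemma treeC_one_le_two (n : ℕ) : treeC 1 n ≤ 2 := by
  unfold treeC
  split_ifs <;> simp

lemma treeC_one_ne_zero (n : ℕ) : treeC 1 n ≠ 0 := by
  unfold treeC
  split_ifs <;> simp

lemma nonempty_setOf_level (n : ℕ) : {v : T.V | T.level v = n}.Nonempty := by
  rw [← coe_levelFinset, Finset.coe_nonempty, ← Finset.card_pos, card_levelFinset]
  exact Nat.pos_of_ne_zero (treeC_one_ne_zero n)

lemma norm_rpow_le_two_mul (hp : 0 < p) (hf : T.memTp p f) (w : T.V) :
    ‖f w‖ ^ p ≤ 2 * T.normTp p f ^ p :=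
  calc ‖f w‖ ^ p ≤ treeC 1 (T.level w) * T.Mp p (T.level w) f ^ p :=
        norm_rpow_le_treeC_mul hp f w
    _ ≤ 2 * T.normTp p f ^ p :=
        mul_le_mul (mod_cast treeC_one_le_two _) (Mp_rpow_le_normTp_rpow hp hf _)
          (Real.rpow_nonneg (Mp_nonneg f _) p) zero_le_two

lemma Mp_comp_rpow_le_two_mul (hp : 0 < p) (φ : T.V → T.V) (hf : T.memTp p f) (n : ℕ) :
    T.Mp p n (f ∘ φ) ^ p ≤ 2 * T.normTp p f ^ p :=
  Mp_rpow_le_of_forall hp.ne' (mul_nonneg zero_le_two (Real.rpow_nonneg (normTp_nonneg f) p))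
    fun v _ => norm_rpow_le_two_mul hp hf (φ v)

theorem boundedCompTp_two_homogeneous (hp : 0 < p) (φ : T.V → T.V) : T.BoundedCompTp p φ :=
  boundedCompTp_of_Mp_rpow_le hp zero_le_two fun _ hf => Mp_comp_rpow_le_two_mul hp φ hf

def IsLevelEnumeration (T : HomTree 1) (a b : ℕ → T.V) : Prop :=
  ∀ n : ℕ, 1 ≤ n → a n ≠ b n ∧ {v : T.V | T.level v = n} = {a n, b n}

namespace IsLevelEnumeration

variable {a b : ℕ → T.V} {n : ℕ}

lemma level_fst (hab : IsLevelEnumeration T a b) (hn : 1 ≤ n) : T.level (a n) = n := by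
  have h : a n ∈ {v : T.V | T.level v = n} := (hab n hn).2 ▸ Set.mem_insert _ _
  exact h

lemma level_snd (hab : IsLevelEnumeration T a b) (hn : 1 ≤ n) : T.level (b n) = n := by
  have h : b n ∈ {v : T.V | T.level v = n} := (hab n hn).2 ▸ Set.mem_insert_of_mem _ rfl
  exact h

lemma eq_or_eq (hab : IsLevelEnumeration T a b) (hn : 1 ≤ n) {v : T.V} (hv : T.level v = n) :
    v = a n ∨ v = b n := by
  have h : v ∈ {v : T.V | T.level v = n} := hv
  rwa [(hab n hn).2] at h

lemma fst_ne_root (hab : IsLevelEnumeration T a b) (hn : 1 ≤ n) : a n ≠ T.root :=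
  fun h => by have := hab.level_fst hn; rw [h, (T.level_eq_zero_iff _).2 rfl] at this; omega

lemma snd_ne_root (hab : IsLevelEnumeration T a b) (hn : 1 ≤ n) : b n ≠ T.root :=
  fun h => by have := hab.level_snd hn; rw [h, (T.level_eq_zero_iff _).2 rfl] at this; omega

lemma Mp_rpow_eq (hab : IsLevelEnumeration T a b) (hp : p ≠ 0) (hn : 1 ≤ n) (f : T.V → ℂ) :
    T.Mp p n f ^ p = (‖f (a n)‖ ^ p + ‖f (b n)‖ ^ p) / 2 := by
  have hlevel : T.levelFinset n = {a n, b n} := by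
    rw [← Finset.coe_inj, coe_levelFinset, (hab n hn).2, Finset.coe_pair]
  rw [Mp_rpow hp, hlevel, Finset.sum_pair (hab n hn).1, treeC, if_neg (by omega)]
  norm_num
  ring

lemma ite_mem_add_ite_mem_le_two (hab : IsLevelEnumeration T a b) (hn : 1 ≤ n) {S : Set T.V}
    (hS : S.InjOn T.level) :
    (if a n ∈ S then (2 : ℝ) else 0) + (if b n ∈ S then 2 else 0) ≤ 2 := by
  have hnot : ¬ (a n ∈ S ∧ b n ∈ S) := fun h =>
    (hab n hn).1 (hS h.1 h.2 (by rw [hab.level_fst hn, hab.level_snd hn]))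
  split_ifs with ha hb hb
  · exact absurd ⟨ha, hb⟩ hnot
  all_goals norm_num

lemma ite_mem_add_ite_mem_eq_two (hab : IsLevelEnumeration T a b) {S : Set T.V}
    (hS : S.InjOn T.level) {s : T.V} (hs : s ∈ S) (hn : 1 ≤ T.level s) :
    (if a (T.level s) ∈ S then (2 : ℝ) else 0) + (if b (T.level s) ∈ S then 2 else 0) = 2 := by
  refine le_antisymm (hab.ite_mem_add_ite_mem_le_two hn hS) ?_
  rcases hab.eq_or_eq hn rfl with h | h <;> rw [← h, if_pos hs]
  · exact le_add_of_nonneg_right (by positivity)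
  · exact le_add_of_nonneg_left (by positivity)

lemma exists_normTp_eq_one (hab : IsLevelEnumeration T a b) (hp : 0 < p) {t : ℝ}
    (ht₀ : 0 ≤ t) (ht₁ : t ≤ 1) {S : Set T.V} (hroot : T.root ∉ S) (hS : S.InjOn T.level)
    (hne : t = 1 ∨ S.Nonempty) :
    ∃ f : T.V → ℂ, T.memTp p f ∧ T.normTp p f = 1 ∧ ‖f T.root‖ ^ p = t ∧
      ∀ v ∈ S, ‖f v‖ ^ p = 2 := by
  classical
  let w : T.V → ℝ := fun v => if v = T.root then t else if v ∈ S then 2 else 0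
  have hw₀ : ∀ v, 0 ≤ w v := fun v => by
    simp only [w]
    split_ifs <;> positivity
  let f : T.V → ℂ := fun v => ((w v ^ p⁻¹ : ℝ) : ℂ)
  have hf : ∀ v, ‖f v‖ ^ p = w v := fun v => by
    rw [Complex.norm_real, Real.norm_of_nonneg (Real.rpow_nonneg (hw₀ v) _),
      Real.rpow_inv_rpow (hw₀ v) hp.ne']
  have hlevel : ∀ n, 1 ≤ n →
      T.Mp p n f ^ p = ((if a n ∈ S then 2 else 0) + (if b n ∈ S then 2 else 0)) / 2 :=
    fun n hn => by
      rw [hab.Mp_rpow_eq hp.ne' hn, hf, hf]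
      simp only [w, if_neg (hab.fst_ne_root hn), if_neg (hab.snd_ne_root hn)]
  have hle : ∀ n, T.Mp p n f ^ p ≤ 1 := by
    intro n
    rcases Nat.eq_zero_or_pos n with rfl | hn
    · simpa [Mp_zero_rpow hp.ne', hf, w] using ht₁
    · rw [hlevel n hn]
      linarith [hab.ite_mem_add_ite_mem_le_two hn hS]
  have hattain : ∃ n, T.Mp p n f ^ p = 1 := by
    rcases hne with rfl | ⟨s, hs⟩
    · exact ⟨0, by simp [Mp_zero_rpow hp.ne', hf, w]⟩
    · have hn : 1 ≤ T.level s :=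
        Nat.one_le_iff_ne_zero.2 (mt (T.level_eq_zero_iff s).1 (ne_of_mem_of_not_mem hs hroot))
      refine ⟨T.level s, ?_⟩
      rw [hlevel _ hn, hab.ite_mem_add_ite_mem_eq_two hS hs hn]
      norm_num
  obtain ⟨hmem, hnorm⟩ := normTp_eq_rpow_inv hp hle hattain
  refine ⟨f, hmem, by rw [hnorm, Real.one_rpow], by simp [hf, w], fun v hv => ?_⟩
  simp [hf, w, hv, ne_of_mem_of_not_mem hv hroot]

end IsLevelEnumeration

variable {a b : ℕ → T.V}

theorem opNormTp_rpow_eq_two_of_injOn (hp : 0 < p) (hab : IsLevelEnumeration T a b) {n : ℕ}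
    (hroot : T.root ∉ φ '' {v | T.level v = n})
    (hinj : (φ '' {v | T.level v = n}).InjOn T.level) :
    T.opNormTp p φ ^ p = 2 := by
  refine opNormTp_rpow_eq hp (fun f hf => Mp_comp_rpow_le_two_mul hp φ hf) ?_
  obtain ⟨f, hf, h1, -, hS⟩ := hab.exists_normTp_eq_one hp le_rfl zero_le_one hroot hinj
    (Or.inr ((nonempty_setOf_level n).image φ))
  exact ⟨f, hf, h1, n, Mp_rpow_eq_of_forall hp.ne' (treeC_one_ne_zero n)
    fun v hv => hS _ ⟨v, hv, rfl⟩⟩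

theorem opNormTp_rpow_eq_two_of_map_root_ne (hp : 0 < p) (hab : IsLevelEnumeration T a b)
    (h : φ T.root ≠ T.root) : T.opNormTp p φ ^ p = 2 := by
  have himage : φ '' {v | T.level v = 0} = {φ T.root} := by
    rw [setOf_level_eq_zero, Set.image_singleton]
  exact opNormTp_rpow_eq_two_of_injOn hp hab (by rw [himage]; exact h.symm)
    (himage ▸ Set.injOn_singleton _ _)

theorem opNormTp_rpow_eq_two_of_pair (hp : 0 < p) (hab : IsLevelEnumeration T a b) {n : ℕ}
    (hn : 1 ≤ n) (ha : φ (a n) ≠ T.root) (hb : φ (b n) ≠ T.root)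
    (hlevel : T.level (φ (a n)) = T.level (φ (b n)) → φ (a n) = φ (b n)) :
    T.opNormTp p φ ^ p = 2 := by
  have himage : φ '' {v | T.level v = n} = {φ (a n), φ (b n)} := by
    rw [(hab n hn).2, Set.image_pair]
  refine opNormTp_rpow_eq_two_of_injOn hp hab (by rw [himage]; simp [ha.symm, hb.symm]) ?_
  rw [himage]
  exact Set.injOn_pair.2 hlevel

theorem opNormTp_rpow_eq_one (hp : 0 < p) (hab : IsLevelEnumeration T a b)
    (hroot : φ T.root = T.root)
    (hle : ∀ f, T.memTp p f → ∀ n, T.Mp p n (f ∘ φ) ^ p ≤ T.normTp p f ^ p) :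
    T.opNormTp p φ ^ p = 1 := by
  refine opNormTp_rpow_eq hp (by simpa using hle) ?_
  obtain ⟨f, hf, h1, hf_root, -⟩ := hab.exists_normTp_eq_one hp zero_le_one le_rfl
    (Set.notMem_empty _) (Set.injOn_empty _) (Or.inl rfl)
  exact ⟨f, hf, h1, 0, by rw [Mp_zero_rpow hp.ne', Function.comp_apply, hroot, hf_root]⟩

lemma Mp_comp_rpow_le_three_halves_mul (hp : 0 < p) (hab : IsLevelEnumeration T a b)
    (hroot : φ T.root = T.root) (h : ∀ n, 1 ≤ n → φ (a n) = T.root ∨ φ (b n) = T.root)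
    (hf : T.memTp p f) (n : ℕ) : T.Mp p n (f ∘ φ) ^ p ≤ 3 / 2 * T.normTp p f ^ p := by
  have hf_root : ‖f T.root‖ ^ p ≤ T.normTp p f ^ p := by
    simpa [Mp_zero_rpow hp.ne'] using Mp_rpow_le_normTp_rpow hp hf 0
  have hN : 0 ≤ T.normTp p f ^ p := Real.rpow_nonneg (normTp_nonneg f) p
  rcases Nat.eq_zero_or_pos n with rfl | hn
  · rw [Mp_zero_rpow hp.ne', Function.comp_apply, hroot]
    linarith
  · rw [hab.Mp_rpow_eq hp.ne' hn, Function.comp_apply, Function.comp_apply]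
    rcases h n hn with h | h <;> rw [h] <;>
      linarith [norm_rpow_le_two_mul hp hf (φ (a n)), norm_rpow_le_two_mul hp hf (φ (b n))]

theorem opNormTp_rpow_eq_three_halves (hp : 0 < p) (hab : IsLevelEnumeration T a b)
    (hroot : φ T.root = T.root)
    (h : ∀ n, 1 ≤ n → (φ (a n) = T.root ∧ φ (b n) ≠ T.root) ∨
      (φ (a n) ≠ T.root ∧ φ (b n) = T.root)) :
    T.opNormTp p φ ^ p = 3 / 2 := by
  refine opNormTp_rpow_eq hp (fun f hf => Mp_comp_rpow_le_three_halves_mul hp hab hroot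
    (fun n hn => (h n hn).imp And.left And.right) hf) ?_
  obtain ⟨u, u', hu, hu', hmean⟩ : ∃ u u', φ u = T.root ∧ φ u' ≠ T.root ∧
      ∀ g : T.V → ℂ, T.Mp p 1 g ^ p = (‖g u‖ ^ p + ‖g u'‖ ^ p) / 2 := by
    rcases h 1 le_rfl with ⟨ha, hb⟩ | ⟨ha, hb⟩
    · exact ⟨a 1, b 1, ha, hb, hab.Mp_rpow_eq hp.ne' le_rfl⟩
    · exact ⟨b 1, a 1, hb, ha, fun g => by rw [hab.Mp_rpow_eq hp.ne' le_rfl, add_comm]⟩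
  obtain ⟨f, hf, h1, hf_root, hf_S⟩ := hab.exists_normTp_eq_one hp zero_le_one le_rfl
    (S := {φ u'}) (by simpa [eq_comm] using hu') (Set.injOn_singleton _ _) (Or.inl rfl)
  refine ⟨f, hf, h1, 1, ?_⟩
  rw [hmean, Function.comp_apply, Function.comp_apply, hu, hf_root, hf_S _ rfl]
  norm_num

end TwoHomogeneous

end HomTree

open HomTree

/-- On the 2-homogeneous tree (`q = 1`, levels `D_n = {a n, b n}` for `n ≥ 1`), every
self-map `φ` induces a bounded `C_φ` on `T_p` (`1 ≤ p < ∞`), with the stated norms. -/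
theorem bounded_comp_Tp_two_homogeneous (T : HomTree 1) (p : ℝ) (hp : 1 ≤ p)
    (a b : ℕ → T.V)
    (hab : ∀ n : ℕ, 1 ≤ n → a n ≠ b n ∧ {v : T.V | T.level v = n} = {a n, b n})
    (phi : T.V → T.V) :
    T.BoundedCompTp p phi ∧
    (phi T.root ≠ T.root → T.opNormTp p phi ^ p = 2) ∧
    (phi T.root = T.root →
      (((∀ v, phi v = T.root) ∨
          (∀ n : ℕ, 1 ≤ n → ∃ m : ℕ, 1 ≤ m ∧
            Set.BijOn phi {v : T.V | T.level v = n} {v : T.V | T.level v = m})) →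
        T.opNormTp p phi ^ p = 1) ∧
      ((∀ n : ℕ, 1 ≤ n →
          (phi (a n) = T.root ∧ phi (b n) ≠ T.root) ∨
          (phi (a n) ≠ T.root ∧ phi (b n) = T.root)) →
        T.opNormTp p phi ^ p = 3 / 2) ∧
      (((∃ n : ℕ, 1 ≤ n ∧ phi (a n) = phi (b n) ∧ phi (a n) ≠ T.root) ∨
          (∃ n : ℕ, 1 ≤ n ∧ T.level (phi (a n)) ≠ T.level (phi (b n)) ∧
            T.level (phi (a n)) ≠ 0 ∧ T.level (phi (b n)) ≠ 0)) →
        T.opNormTp p phi ^ p = 2)) := by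
  have hp₀ : 0 < p := by linarith
  have hab : IsLevelEnumeration T a b := hab
  refine ⟨boundedCompTp_two_homogeneous hp₀ phi, opNormTp_rpow_eq_two_of_map_root_ne hp₀ hab,
    fun hroot => ⟨?_, opNormTp_rpow_eq_three_halves hp₀ hab hroot, ?_⟩⟩
  · rintro (h | h)
    · exact opNormTp_rpow_eq_one hp₀ hab hroot fun f hf =>
        Mp_comp_rpow_le_of_forall_eq_root hp₀ h hf
    · exact opNormTp_rpow_eq_one hp₀ hab hroot fun f hf =>
        Mp_comp_rpow_le_of_bijOn hp₀ hroot (fun n hn => (h n hn).imp fun _ hm => hm.2) hf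
  · rintro (⟨n, hn, heq, hne⟩ | ⟨n, hn, hlevel, ha, hb⟩)
    · exact opNormTp_rpow_eq_two_of_pair hp₀ hab hn hne (heq ▸ hne) fun _ => heq
    · exact opNormTp_rpow_eq_two_of_pair hp₀ hab hn (mt (T.level_eq_zero_iff _).2 ha)
        (mt (T.level_eq_zero_iff _).2 hb) (absurd · hlevel)
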